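/- Let U₀ ∈ D(C) be orthogonal to N(C) and satisfy c ‖U₀‖ ≤ ‖C U₀‖, and let U₁ ∈ N(C) ∩ K. Then, with U := U₀ + U₁ (so U ∈ D(C) and C U = C U₀), one has ‖P U‖² + ‖C U‖² ≥ min{1, c²} ‖U‖². -/

import Mathlib

open scoped InnerProductSpace

/-! Write `U = U₀ + U₁`. Since `U₁ ∈ K`, the component of `U` orthogonal to `K` is that of `U₀`,
so Pythagoras gives `‖U‖² ≤ ‖P U‖² + ‖U₀‖²`; and `C U = C U₀` with `c² ‖U₀‖² ≤ ‖C U₀‖²`. -/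

theorem LinearPMap.apply_add_of_apply_eq_zero {R E F : Type*} [Ring R] [AddCommGroup E]
    [Module R E] [AddCommGroup F] [Module R F] (f : E →ₗ.[R] F) {x y : E}
    (hx : x ∈ f.domain) (hy : y ∈ f.domain) (hfy : f ⟨y, hy⟩ = 0) :
    f ⟨x + y, f.domain.add_mem hx hy⟩ = f ⟨x, hx⟩ := by
  have hsplit : (⟨x + y, f.domain.add_mem hx hy⟩ : f.domain) = ⟨x, hx⟩ + ⟨y, hy⟩ := rfl
  rw [hsplit, f.map_add, hfy, add_zero]

theorem Submodule.norm_add_sq_le_norm_starProjection_sq_add_norm_sq {𝕜 E : Type*} [RCLike 𝕜]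
    [NormedAddCommGroup E] [InnerProductSpace 𝕜 E] (K : Submodule 𝕜 E)
    [K.HasOrthogonalProjection] (v : E) {w : E} (hw : w ∈ K) :
    ‖v + w‖ ^ 2 ≤ ‖K.starProjection (v + w)‖ ^ 2 + ‖v‖ ^ 2 := by
  have horth : Kᗮ.starProjection (v + w) = Kᗮ.starProjection v := by
    rw [map_add, K.starProjection_orthogonal_apply_eq_zero hw, add_zero]
  rw [K.norm_sq_eq_add_norm_sq_starProjection (v + w), horth]
  gcongr
  exact Kᗮ.norm_starProjection_apply_le v

theorem min_one_mul_add_le {a b t : ℝ} (ha : 0 ≤ a) (hb : 0 ≤ b) :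
    min 1 t * (a + b) ≤ a + t * b := by
  rw [mul_add]
  gcongr
  · exact mul_le_of_le_one_left ha (min_le_left 1 t)
  · exact min_le_right 1 t

theorem statement12_general {H X : Type*}
    [NormedAddCommGroup H] [InnerProductSpace ℝ H]
    [NormedAddCommGroup X] [InnerProductSpace ℝ X]
    (C : H →ₗ.[ℝ] X)
    (K : Submodule ℝ H) [K.HasOrthogonalProjection]
    (c : ℝ) (hc0 : 0 < c)
    (U₀ U₁ : H)
    (hU₀dom : U₀ ∈ C.domain)
    (hc : c * ‖U₀‖ ≤ ‖C ⟨U₀, hU₀dom⟩‖)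
    -- `U₁ ∈ N(C) ∩ K`
    (hU₁dom : U₁ ∈ C.domain) (hU₁ker : C ⟨U₁, hU₁dom⟩ = 0) (hU₁K : U₁ ∈ K) :
    -- conclusion: `U = U₀ + U₁ ∈ D(C)`, `C U = C U₀`, and the estimate
    ∃ hU : U₀ + U₁ ∈ C.domain,
      C ⟨U₀ + U₁, hU⟩ = C ⟨U₀, hU₀dom⟩ ∧
      min 1 (c ^ 2) * ‖U₀ + U₁‖ ^ 2 ≤
        ‖((K.orthogonalProjectionOnto (U₀ + U₁) : ↥K) : H)‖ ^ 2 +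
          ‖C ⟨U₀ + U₁, hU⟩‖ ^ 2 := by
  have hCU := C.apply_add_of_apply_eq_zero hU₀dom hU₁dom hU₁ker
  refine ⟨C.domain.add_mem hU₀dom hU₁dom, hCU, ?_⟩
  rw [hCU, ← K.starProjection_apply]
  have hPU := K.norm_add_sq_le_norm_starProjection_sq_add_norm_sq U₀ hU₁K
  have hCU₀ : c ^ 2 * ‖U₀‖ ^ 2 ≤ ‖C ⟨U₀, hU₀dom⟩‖ ^ 2 := by
    rw [← mul_pow]
    exact pow_le_pow_left₀ (by positivity) hc 2
  calc min 1 (c ^ 2) * ‖U₀ + U₁‖ ^ 2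
      ≤ min 1 (c ^ 2) * (‖K.starProjection (U₀ + U₁)‖ ^ 2 + ‖U₀‖ ^ 2) := by gcongr
    _ ≤ ‖K.starProjection (U₀ + U₁)‖ ^ 2 + c ^ 2 * ‖U₀‖ ^ 2 :=
        min_one_mul_add_le (sq_nonneg _) (sq_nonneg _)
    _ ≤ ‖K.starProjection (U₀ + U₁)‖ ^ 2 + ‖C ⟨U₀, hU₀dom⟩‖ ^ 2 := by gcongr

theorem statement12 {H X : Type*}
    [NormedAddCommGroup H] [InnerProductSpace ℝ H] [CompleteSpace H]
    [NormedAddCommGroup X] [InnerProductSpace ℝ X]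
    (C : H →ₗ.[ℝ] X)
    (K : Submodule ℝ H) (hK : IsClosed (K : Set H)) [K.HasOrthogonalProjection]
    (c : ℝ) (hc0 : 0 < c)
    (U₀ U₁ : H)
    (hU₀dom : U₀ ∈ C.domain)
    -- `U₀` is orthogonal to `N(C)`
    (hU₀orth : ∀ (v : H) (hv : v ∈ C.domain), C ⟨v, hv⟩ = 0 → ⟪U₀, v⟫_ℝ = 0)
    (hc : c * ‖U₀‖ ≤ ‖C ⟨U₀, hU₀dom⟩‖)
    -- `U₁ ∈ N(C) ∩ K`
    (hU₁dom : U₁ ∈ C.domain) (hU₁ker : C ⟨U₁, hU₁dom⟩ = 0) (hU₁K : U₁ ∈ K) :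
    -- conclusion: `U = U₀ + U₁ ∈ D(C)`, `C U = C U₀`, and the estimate
    ∃ hU : U₀ + U₁ ∈ C.domain,
      C ⟨U₀ + U₁, hU⟩ = C ⟨U₀, hU₀dom⟩ ∧
      min 1 (c ^ 2) * ‖U₀ + U₁‖ ^ 2 ≤
        ‖((K.orthogonalProjectionOnto (U₀ + U₁) : ↥K) : H)‖ ^ 2 +
          ‖C ⟨U₀ + U₁, hU⟩‖ ^ 2 :=
  statement12_general C K c hc0 U₀ U₁ hU₀dom hc hU₁dom hU₁ker hU₁K
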